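/- Let p be a prime, c ≥ 1 an integer, and ℓ an integer. Define V(p^n, ℓ) = {(x,y) ∈ ((ℤ/p^nℤ)^c)^2 : x·y ≡ ℓ (mod p^n)}, where x·y is the standard dot product. Then for n ≥ 1, the cardinality of V(p^n, ℓ) satisfies #V(p^n, ℓ) = (p^{cn} − p^{c(n−1)}) · p^{(c−1)n} + p^c · #V(p^{n−1}, ℓ/p), where the second term is interpreted as 0 if p does not divide ℓ (and #V(p^0, m) = 1 for any integer m). -/

import Mathlib

/-- The number of pairs `(x, y)` of vectors in `((ℤ/mℤ)^c)^2` whose dot product is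
the residue of `ℓ` modulo `m`. -/
noncomputable def Vcard (c m : ℕ) (ℓ : ℤ) : ℕ :=
  Nat.card {xy : (Fin c → ZMod m) × (Fin c → ZMod m) //
    (∑ i, xy.1 i * xy.2 i) = (ℓ : ZMod m)}

/-!
Split the pairs `(x, y)` according to whether some coordinate of `x` is a unit of `ℤ/p^n`.
If one is, `y ↦ x ⬝ᵥ y` is a surjective additive map onto `ℤ/p^n`, so each value has
`p^(n(c-1))` preimages, and there are `p^(nc) - p^((n-1)c)` such `x`. Otherwise `x = p x'` for a
unique `x' ∈ (ℤ/p^(n-1))^c`, and `x ⬝ᵥ y = p (x' ⬝ᵥ ȳ)` with `ȳ` the reduction of `y` modulo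
`p^(n-1)`. This equals `ℓ` iff `p ∣ ℓ` and `x' ⬝ᵥ ȳ = ℓ / p`, and each `ȳ` has `p^c` lifts `y`.
-/

open Finset

theorem card_subtype_prod_eq_sum {α β : Type*} [Fintype α] [Finite β] (P : α → β → Prop) :
    Nat.card {xy : α × β // P xy.1 xy.2} = ∑ x, Nat.card {y // P x y} := by
  rw [Nat.card_congr (Equiv.subtypeProdEquivSigmaSubtype P), Nat.card_sigma]

theorem AddMonoidHom.card_subtype_comp_mul_card {A B : Type*} [AddGroup A] [AddGroup B]
    {f : A →+ B} (hf : Function.Surjective f) (q : B → Prop) :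
    Nat.card {a // q (f a)} * Nat.card B = Nat.card {b // q b} * Nat.card A := by
  have hfiber : Nat.card {a // q (f a)} = Nat.card {b // q b} * Nat.card f.ker := by
    rw [← Nat.card_prod, ← Nat.card_congr (Equiv.sigmaSubtypeFiberEquivSubtype f fun _ => Iff.rfl)]
    exact Nat.card_congr ((Equiv.sigmaCongrRight fun b : Subtype q =>
      fiberEquivKerOfSurjective hf b.1).trans (Equiv.sigmaEquivProd _ _))
  have hker : Nat.card f.ker * Nat.card B = Nat.card A := by
    rw [← f.ker.card_mul_index, AddSubgroup.index_ker, f.range_eq_top_of_surjective hf,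
      AddSubgroup.card_top]
  rw [hfiber, mul_assoc, hker]

theorem card_dotProduct_eq_of_isUnit {R ι : Type*} [CommRing R] [Finite R] [Fintype ι]
    [DecidableEq ι] {x : ι → R} {i : ι} (hx : IsUnit (x i)) (t : R) :
    Nat.card {y : ι → R // x ⬝ᵥ y = t} = Nat.card R ^ (Fintype.card ι - 1) := by
  let f : (ι → R) →+ R := AddMonoidHom.mk' (x ⬝ᵥ ·) (dotProduct_add x)
  have hf : Function.Surjective f := fun s =>
    ⟨Pi.single i (↑hx.unit⁻¹ * s), by simp [f, dotProduct_single, ← mul_assoc]⟩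
  have h := AddMonoidHom.card_subtype_comp_mul_card hf (· = t)
  rw [Nat.card_unique (α := {b // b = t}), one_mul, Nat.card_fun, Nat.card_eq_fintype_card (α := ι),
    ← pow_sub_one_mul (Fintype.card_pos_iff.2 ⟨i⟩).ne'] at h
  exact Nat.eq_of_mul_eq_mul_right Nat.card_pos h

namespace ZMod

/-- `b ↦ p * b`, well defined because `p * p ^ m = 0` in `ZMod (p ^ (m + 1))`. -/
def mulBy (p m : ℕ) : ZMod (p ^ m) →+ ZMod (p ^ (m + 1)) :=
  lift (p ^ m) ⟨(AddMonoidHom.mulLeft (p : ZMod (p ^ (m + 1)))).comp (Int.castAddHom _), by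
    simp only [AddMonoidHom.coe_comp, Function.comp_apply, Int.coe_castAddHom,
      AddMonoidHom.coe_mulLeft, Int.cast_natCast]
    rw [← Nat.cast_mul, ← pow_succ', natCast_self]⟩

variable {p m : ℕ}

theorem mulBy_intCast (k : ℤ) : mulBy p m k = p * k :=
  lift_coe _ _ k

theorem mulBy_mul (b : ZMod (p ^ m)) (y : ZMod (p ^ (m + 1))) :
    mulBy p m b * y = mulBy p m (b * castHom (pow_dvd_pow p m.le_succ) _ y) := by
  obtain ⟨k, rfl⟩ := intCast_surjective b
  obtain ⟨j, rfl⟩ := intCast_surjective y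
  rw [map_intCast (castHom _ (ZMod (p ^ m))), ← Int.cast_mul, mulBy_intCast, mulBy_intCast]
  push_cast
  ring

theorem mulBy_injective (hp : p ≠ 0) : Function.Injective (mulBy p m) := by
  refine (injective_iff_map_eq_zero _).2 fun b hb => ?_
  obtain ⟨k, rfl⟩ := intCast_surjective b
  rw [mulBy_intCast, ← Int.cast_natCast, ← Int.cast_mul, intCast_zmod_eq_zero_iff_dvd,
    pow_succ', Nat.cast_mul, mul_dvd_mul_iff_left (by exact_mod_cast hp)] at hb
  exact (intCast_zmod_eq_zero_iff_dvd _ _).2 hb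

variable [Fact p.Prime]

theorem range_mulBy : Set.range (mulBy p m) = nonunits (ZMod (p ^ (m + 1))) := by
  ext a
  rw [mem_nonunits_iff]
  constructor
  · rintro ⟨b, rfl⟩
    obtain ⟨k, rfl⟩ := intCast_surjective b
    rw [mulBy_intCast]
    exact fun h => prime_natCast_not_isUnit_pow Fact.out m.succ_pos (isUnit_of_mul_isUnit_left h)
  · intro ha
    rw [← natCast_zmod_val a, isUnit_natCast_iff_not_dvd_pow Fact.out m.succ_pos, not_not] at ha
    obtain ⟨k, hk⟩ := ha
    refine ⟨k, ?_⟩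
    rw [← Int.cast_natCast, mulBy_intCast, ← natCast_zmod_val a, hk]
    push_cast
    rfl

theorem mulBy_eq_intCast_iff (s : ZMod (p ^ m)) (ℓ : ℤ) :
    mulBy p m s = ℓ ↔ (p : ℤ) ∣ ℓ ∧ s = ((ℓ / p : ℤ) : ZMod (p ^ m)) := by
  have hp : p ≠ 0 := (Fact.out : p.Prime).ne_zero
  have hp' : (p : ℤ) ≠ 0 := by exact_mod_cast hp
  constructor
  · intro h
    have hdvd : (p : ℤ) ∣ ℓ := by
      obtain ⟨k, rfl⟩ := intCast_surjective s
      rw [mulBy_intCast] at h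
      have := congrArg (castHom (dvd_pow_self p m.succ_ne_zero) (ZMod p)) h
      simp only [map_mul, map_natCast, map_intCast, natCast_self, zero_mul] at this
      exact (intCast_zmod_eq_zero_iff_dvd ℓ p).1 this.symm
    refine ⟨hdvd, mulBy_injective hp ?_⟩
    obtain ⟨j, rfl⟩ := hdvd
    rw [h, Int.mul_ediv_cancel_left _ hp', mulBy_intCast]
    push_cast
    rfl
  · rintro ⟨⟨j, rfl⟩, rfl⟩
    rw [Int.mul_ediv_cancel_left _ hp', mulBy_intCast]
    push_cast
    rfl

noncomputable def piNonunitsEquiv (ι : Type*) :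
    (ι → ZMod (p ^ m)) ≃ {x : ι → ZMod (p ^ (m + 1)) // ∀ i, x i ∈ nonunits _} :=
  (Equiv.piCongrRight fun _ =>
    (Equiv.ofInjective _ (mulBy_injective (Fact.out : p.Prime).ne_zero)).trans
      (Equiv.setCongr range_mulBy)).trans Equiv.subtypePiEquivPi.symm

theorem coe_piNonunitsEquiv {ι : Type*} (x : ι → ZMod (p ^ m)) :
    (piNonunitsEquiv ι x : ι → ZMod (p ^ (m + 1))) = mulBy p m ∘ x :=
  rfl

end ZMod

section Counting

open ZMod

variable {p : ℕ} [Fact p.Prime] {m : ℕ}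

theorem card_dotProduct_comp_castHom {ι : Type*} [Fintype ι] (x : ι → ZMod (p ^ m))
    (t : ZMod (p ^ m)) :
    Nat.card {y : ι → ZMod (p ^ (m + 1)) // x ⬝ᵥ (castHom (pow_dvd_pow p m.le_succ) _ ∘ y) = t} =
      p ^ Fintype.card ι * Nat.card {z // x ⬝ᵥ z = t} := by
  have h := AddMonoidHom.card_subtype_comp_mul_card
    (f := (castHom (pow_dvd_pow p m.le_succ) (ZMod (p ^ m))).toAddMonoidHom.compLeft ι)
    (castHom_surjective (pow_dvd_pow p m.le_succ)).comp_left (fun z => x ⬝ᵥ z = t)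
  simp only [Nat.card_fun, Nat.card_zmod, Nat.card_eq_fintype_card (α := ι)] at h
  refine Nat.eq_of_mul_eq_mul_right
    (pow_pos (pow_pos (Fact.out : p.Prime).pos m) (Fintype.card ι)) (h.trans ?_)
  rw [pow_succ', mul_pow]
  ring

theorem card_dotProduct_mulBy {ι : Type*} [Fintype ι] (x : ι → ZMod (p ^ m)) (ℓ : ℤ) :
    Nat.card {y : ι → ZMod (p ^ (m + 1)) // (mulBy p m ∘ x) ⬝ᵥ y = ℓ} =
      if (p : ℤ) ∣ ℓ then p ^ Fintype.card ι * Nat.card {z // x ⬝ᵥ z = ((ℓ / p : ℤ) : ZMod (p ^ m))}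
      else 0 := by
  have hdot (y : ι → ZMod (p ^ (m + 1))) :
      (mulBy p m ∘ x) ⬝ᵥ y = mulBy p m (x ⬝ᵥ (castHom (pow_dvd_pow p m.le_succ) _ ∘ y)) := by
    simp only [dotProduct, Function.comp_apply, mulBy_mul, map_sum]
  simp_rw [hdot, mulBy_eq_intCast_iff]
  split_ifs with h
  · simp only [h, true_and]
    exact card_dotProduct_comp_castHom x _
  · simp [h]

theorem Vcard_eq_sum (c q : ℕ) [NeZero q] (ℓ : ℤ) :
    Vcard c q ℓ = ∑ x : Fin c → ZMod q, Nat.card {y // x ⬝ᵥ y = ℓ} :=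
  card_subtype_prod_eq_sum fun x y => x ⬝ᵥ y = (ℓ : ZMod q)

variable (c : ℕ) (ℓ : ℤ)

open scoped Classical in
theorem sum_card_dotProduct_of_nonunits :
    ∑ x : Fin c → ZMod (p ^ (m + 1)) with ∀ i, x i ∈ nonunits _, Nat.card {y // x ⬝ᵥ y = ℓ} =
      p ^ c * if (p : ℤ) ∣ ℓ then Vcard c (p ^ m) (ℓ / p) else 0 := by
  rw [Finset.sum_subtype _ fun x => mem_filter_univ x, ← (piNonunitsEquiv (Fin c)).sum_comp]
  simp only [coe_piNonunitsEquiv, card_dotProduct_mulBy, Fintype.card_fin]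
  split_ifs
  · rw [Vcard_eq_sum, Finset.mul_sum]
  · simp

open scoped Classical in
theorem sum_card_dotProduct_of_not_nonunits :
    ∑ x : Fin c → ZMod (p ^ (m + 1)) with ¬∀ i, x i ∈ nonunits _, Nat.card {y // x ⬝ᵥ y = ℓ} =
      ((p ^ (m + 1)) ^ c - (p ^ m) ^ c) * (p ^ (m + 1)) ^ (c - 1) := by
  have hfiber (x : Fin c → ZMod (p ^ (m + 1))) (hx : ¬∀ i, x i ∈ nonunits _) :
      Nat.card {y // x ⬝ᵥ y = ℓ} = (p ^ (m + 1)) ^ (c - 1) := by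
    obtain ⟨i, hi⟩ := not_forall.1 hx
    rw [card_dotProduct_eq_of_isUnit (not_not.1 hi), Nat.card_zmod, Fintype.card_fin]
  have hcard : #{x : Fin c → ZMod (p ^ (m + 1)) | ∀ i, x i ∈ nonunits _} = (p ^ m) ^ c := by
    rw [← Fintype.card_subtype, ← Fintype.card_congr (piNonunitsEquiv (Fin c)), Fintype.card_fun,
      ZMod.card, Fintype.card_fin]
  have hsplit := card_filter_add_card_filter_not (s := univ)
    fun x : Fin c → ZMod (p ^ (m + 1)) => ∀ i, x i ∈ nonunits _
  rw [hcard, card_univ, Fintype.card_fun, ZMod.card, Fintype.card_fin] at hsplit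
  rw [sum_congr rfl fun x hx => hfiber x (mem_filter_univ x |>.1 hx), sum_const, smul_eq_mul]
  congr 1
  omega

end Counting

theorem stmt0 (p c n : ℕ) (hp : p.Prime) (hn : 1 ≤ n) (ℓ : ℤ) :
    Vcard c (p ^ n) ℓ =
      (p ^ (c * n) - p ^ (c * (n - 1))) * p ^ ((c - 1) * n) +
        p ^ c * (if (p : ℤ) ∣ ℓ then Vcard c (p ^ (n - 1)) (ℓ / p) else 0) := by
  classical
  have := Fact.mk hp
  obtain ⟨m, rfl⟩ := Nat.exists_eq_add_of_le' hn
  rw [Nat.add_sub_cancel, Vcard_eq_sum, ← sum_filter_not_add_sum_filter univ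
    (fun x : Fin c → ZMod (p ^ (m + 1)) => ∀ i, x i ∈ nonunits _),
    sum_card_dotProduct_of_not_nonunits, sum_card_dotProduct_of_nonunits, pow_mul', pow_mul',
    pow_mul']
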